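/- arXiv:1301.5682 — 3 statements merged into one kernel-verified Lean document; each statement's English description precedes it below -/
import Mathlib

section
/- For any a ≥ 0, either e(a) ≥ 0 or e(a) = -∞. (That is, if the Gross-Pitaevskii energy infimum is negative, it is -∞.) -/
open MeasureTheory Real Filter

noncomputable section

abbrev E2 : Type := EuclideanSpace ℝ (Fin 2)

/-- squared norm of the gradient -/
def gradSq (u : E2 → ℝ) (x : E2) : ℝ := ‖fderiv ℝ u x‖ ^ 2

/-- the Laplacian as the sum of second partial derivatives -/
def lap (u : E2 → ℝ) (x : E2) : ℝ :=
  ∑ i : Fin 2, fderiv ℝ (fun y => fderiv ℝ u y (EuclideanSpace.single i 1)) x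
      (EuclideanSpace.single i 1)

/-- membership in H¹(ℝ²) together with L⁴ (which follows by Sobolev embedding) -/
def IsH1 (u : E2 → ℝ) : Prop :=
  Differentiable ℝ u ∧ Integrable (fun x => u x ^ 2) ∧
    Integrable (gradSq u) ∧ Integrable (fun x => u x ^ 4)

/-- `Q` is the (unique) positive radial H¹ solution of `-ΔQ + Q - Q³ = 0` in ℝ² -/
def IsGroundState (Q : E2 → ℝ) : Prop :=
  ContDiff ℝ 2 Q ∧ (∀ x, 0 < Q x) ∧ (∀ x y : E2, ‖x‖ = ‖y‖ → Q x = Q y) ∧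
    IsH1 Q ∧ ∀ x, -lap Q x + Q x - Q x ^ 3 = 0

/-- the space 𝓗 : H¹ functions with finite potential energy -/
def InH (V : E2 → ℝ) (u : E2 → ℝ) : Prop :=
  IsH1 u ∧ Integrable (fun x => V x * u x ^ 2)

/-- the Gross–Pitaevskii functional -/
def Ea (V : E2 → ℝ) (a : ℝ) (u : E2 → ℝ) : ℝ :=
  (∫ x, gradSq u x) + (∫ x, V x * u x ^ 2) - a / 2 * (∫ x, u x ^ 4)

/-- a minimizer of the GP functional on the unit L² sphere of 𝓗 -/
def IsMinimizer (V : E2 → ℝ) (a : ℝ) (u : E2 → ℝ) : Prop :=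
  InH V u ∧ (∫ x, u x ^ 2) = 1 ∧
    ∀ v, InH V v → (∫ x, v x ^ 2) = 1 → Ea V a u ≤ Ea V a v

/-- the GP ground-state energy, with values in ℝ ∪ {±∞} -/
def gpE (V : E2 → ℝ) (a : ℝ) : EReal :=
  sInf {y : EReal | ∃ u, InH V u ∧ (∫ x, u x ^ 2) = 1 ∧ y = (Ea V a u : EReal)}

/-! If `e(a) < 0`, pick `u` of unit mass with `E_a(u) < 0`; as `V ≥ 0`, already the free
energy `Ea 0 a u = ∫ |∇u|² - (a/2) ∫ u⁴` is negative. Multiplying `u` by a wide cutoff and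
renormalizing keeps it negative and makes the support bounded. The L²-preserving dilation
`t w(x₀ + t (x - x₀))` multiplies the free energy by `t²`, so it tends to `-∞`, while for large
`t` the support shrinks into a small ball around a point `x₀` where `u ≠ 0`, on which `V` is
bounded. Hence `E_a → -∞` along these functions and `e(a) = -∞`. -/

open Metric Topology

lemma tendsto_integral_of_eventually_eq_of_dominated {α ι : Type*} [MeasurableSpace α]
    {μ : Measure α} {l : Filter ι} [l.IsCountablyGenerated] {F : ι → α → ℝ} {f g : α → ℝ}
    (hF : ∀ i, AEStronglyMeasurable (F i) μ) (hg : Integrable g μ)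
    (hle : ∀ i x, |F i x| ≤ g x) (hlim : ∀ x, ∀ᶠ i in l, F i x = f x) :
    Tendsto (fun i => ∫ x, F i x ∂μ) l (𝓝 (∫ x, f x ∂μ)) :=
  tendsto_integral_filter_of_dominated_convergence g (.of_forall hF)
    (.of_forall fun i => .of_forall (hle i)) hg
    (.of_forall fun x => tendsto_const_nhds.congr' ((hlim x).mono fun _ h => h.symm))

lemma integrable_mul_sq_of_ne_zero {α : Type*} [MeasurableSpace α] {μ : Measure α}
    {V u v : α → ℝ} {C : ℝ} (hVu : Integrable (fun x => V x * u x ^ 2) μ) (hu : Measurable u)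
    (hv : Measurable v) (hv2 : Integrable (fun x => v x ^ 2) μ)
    (hvu : ∀ x, v x ≠ 0 → u x ≠ 0 ∧ |V x| ≤ C) :
    Integrable (fun x => V x * v x ^ 2) μ := by
  -- `V` need not be measurable, but `V v²` is the measurable `V u²` times `v² / u²`
  have hfactor : (fun x => V x * v x ^ 2) = fun x => V x * u x ^ 2 * ((u x ^ 2)⁻¹ * v x ^ 2) := by
    funext x
    by_cases hx : v x = 0
    · simp [hx]
    · field_simp [(hvu x hx).1]
  refine (hv2.const_mul C).mono' ?_ (.of_forall fun x => ?_)
  · rw [hfactor]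
    exact hVu.aestronglyMeasurable.mul
      ((hu.pow_const 2).inv.mul (hv.pow_const 2)).aestronglyMeasurable
  · by_cases hx : v x = 0
    · simp [hx]
    · rw [norm_mul, Real.norm_eq_abs, norm_of_nonneg (sq_nonneg _)]
      exact mul_le_mul_of_nonneg_right (hvu x hx).2 (sq_nonneg _)

lemma integral_mul_sq_le {α : Type*} [MeasurableSpace α] {μ : Measure α} {V v : α → ℝ} {C : ℝ}
    (hVv : Integrable (fun x => V x * v x ^ 2) μ) (hv2 : Integrable (fun x => v x ^ 2) μ)
    (hC : ∀ x, v x ≠ 0 → V x ≤ C) :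
    ∫ x, V x * v x ^ 2 ∂μ ≤ C * ∫ x, v x ^ 2 ∂μ := by
  rw [← integral_const_mul]
  refine integral_mono hVv (hv2.const_mul C) fun x => ?_
  by_cases hx : v x = 0
  · simp [hx]
  · exact mul_le_mul_of_nonneg_right (hC x hx) (sq_nonneg _)

lemma abs_mul_pow_le {φ u : ℝ} (hφ : |φ| ≤ 1) {k : ℕ} (hk : Even k) : |(φ * u) ^ k| ≤ u ^ k := by
  rw [abs_pow, abs_mul, ← hk.pow_abs u]
  exact pow_le_pow_left₀ (by positivity) (mul_le_of_le_one_left (abs_nonneg _) hφ) k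

lemma Ea_zero (a : ℝ) (u : E2 → ℝ) : Ea 0 a u = (∫ x, gradSq u x) - a / 2 * ∫ x, u x ^ 4 := by
  simp only [Ea, Pi.zero_apply, zero_mul, integral_zero, add_zero]

lemma Ea_eq_Ea_zero_add (V : E2 → ℝ) (a : ℝ) (u : E2 → ℝ) :
    Ea V a u = Ea 0 a u + ∫ x, V x * u x ^ 2 := by
  rw [Ea, Ea_zero]
  ring

lemma aestronglyMeasurable_gradSq (u : E2 → ℝ) : AEStronglyMeasurable (gradSq u) :=
  ((measurable_fderiv ℝ u).norm.pow_const 2).aestronglyMeasurable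

lemma gradSq_const_mul {u : E2 → ℝ} {x : E2} (hu : DifferentiableAt ℝ u x) (c : ℝ) :
    gradSq (fun y => c * u y) x = c ^ 2 * gradSq u x := by
  rw [gradSq, gradSq, fderiv_const_mul hu, norm_smul, Real.norm_eq_abs, mul_pow, sq_abs]

lemma gradSq_mul_le {φ u : E2 → ℝ} {C : ℝ} (hφ : Differentiable ℝ φ) (hu : Differentiable ℝ u)
    (hφ1 : ∀ x, |φ x| ≤ 1) (hC : ∀ x, ‖fderiv ℝ φ x‖ ≤ C) (x : E2) :
    gradSq (fun y => φ y * u y) x ≤ 2 * gradSq u x + 2 * C ^ 2 * u x ^ 2 := by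
  have hnorm : ‖fderiv ℝ (fun y => φ y * u y) x‖ ≤ ‖fderiv ℝ u x‖ + C * |u x| := by
    rw [fderiv_fun_mul (hφ x) (hu x)]
    refine (norm_add_le _ _).trans ?_
    rw [norm_smul, norm_smul, Real.norm_eq_abs, Real.norm_eq_abs, mul_comm C]
    gcongr
    · exact mul_le_of_le_one_left (norm_nonneg _) (hφ1 x)
    · exact hC x
  calc gradSq (fun y => φ y * u y) x ≤ (‖fderiv ℝ u x‖ + C * |u x|) ^ 2 := by
        rw [gradSq]; gcongr
    _ ≤ 2 * gradSq u x + 2 * C ^ 2 * u x ^ 2 := by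
        rw [gradSq, ← sq_abs (u x)]
        nlinarith [sq_nonneg (‖fderiv ℝ u x‖ - C * |u x|)]

lemma IsH1.const_mul {u : E2 → ℝ} (hu : IsH1 u) (c : ℝ) : IsH1 fun x => c * u x := by
  obtain ⟨hdiff, hL2, hgrad, hL4⟩ := hu
  refine ⟨hdiff.const_mul c, ?_, ?_, ?_⟩
  · simp_rw [mul_pow]; exact hL2.const_mul _
  · rw [show gradSq (fun x => c * u x) = _ from funext fun x => gradSq_const_mul (hdiff x) c]
    exact hgrad.const_mul _
  · simp_rw [mul_pow]; exact hL4.const_mul _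

lemma IsH1.mul_of_bounded {φ u : E2 → ℝ} {C : ℝ} (hu : IsH1 u) (hφ : Differentiable ℝ φ)
    (hφ1 : ∀ x, |φ x| ≤ 1) (hC : ∀ x, ‖fderiv ℝ φ x‖ ≤ C) : IsH1 fun x => φ x * u x := by
  obtain ⟨hdiff, hL2, hgrad, hL4⟩ := hu
  have hcont : Continuous fun x => φ x * u x := (hφ.mul hdiff).continuous
  have hpow : ∀ k x, Even k → ‖(φ x * u x) ^ k‖ ≤ u x ^ k := fun k x hk =>
    abs_mul_pow_le (hφ1 x) hk
  refine ⟨hφ.mul hdiff, ?_, ?_, ?_⟩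
  · exact hL2.mono' (hcont.pow 2).aestronglyMeasurable (.of_forall fun x => hpow 2 x even_two)
  · refine ((hgrad.const_mul 2).add (hL2.const_mul (2 * C ^ 2))).mono'
      (aestronglyMeasurable_gradSq _) (.of_forall fun x => ?_)
    rw [Real.norm_eq_abs, abs_of_nonneg (sq_nonneg _)]
    exact gradSq_mul_le hφ hdiff hφ1 hC x
  · exact hL4.mono' (hcont.pow 4).aestronglyMeasurable
      (.of_forall fun x => hpow 4 x (by decide))

section Dilation

variable {t : ℝ} {x₀ : E2}

def dilate (t : ℝ) (x₀ : E2) (w : E2 → ℝ) (x : E2) : ℝ := t * w (x₀ + t • (x - x₀))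

lemma integral_comp_dilation (F : E2 → ℝ) (x₀ : E2) (ht : 0 < t) :
    ∫ x, F (x₀ + t • (x - x₀)) = (t ^ 2)⁻¹ * ∫ x, F x := by
  rw [integral_sub_right_eq_self (fun y => F (x₀ + t • y)),
    Measure.integral_comp_smul volume (fun y => F (x₀ + y)), integral_add_left_eq_self,
    finrank_euclideanSpace_fin, smul_eq_mul, abs_of_pos (by positivity)]

lemma MeasureTheory.Integrable.comp_dilation {F : E2 → ℝ} (hF : Integrable F) (x₀ : E2)
    (ht : 0 < t) :
    Integrable fun x => F (x₀ + t • (x - x₀)) :=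
  ((hF.comp_add_left x₀).comp_smul ht.ne').comp_sub_right x₀

lemma gradSq_dilate {w : E2 → ℝ} (hw : Differentiable ℝ w) (x : E2) :
    gradSq (dilate t x₀ w) x = t ^ 4 * gradSq w (x₀ + t • (x - x₀)) := by
  have hinner : HasFDerivAt (fun y : E2 => x₀ + t • (y - x₀)) (t • ContinuousLinearMap.id ℝ E2) x :=
    (((hasFDerivAt_id x).sub_const x₀).const_smul t).const_add x₀
  have hderiv : HasFDerivAt (fun y => t * w (x₀ + t • (y - x₀)))
      (t • (fderiv ℝ w (x₀ + t • (x - x₀))).comp (t • ContinuousLinearMap.id ℝ E2)) x :=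
    ((hw _).hasFDerivAt.comp x hinner).const_mul t
  have hcomp : (fderiv ℝ w (x₀ + t • (x - x₀))).comp (t • ContinuousLinearMap.id ℝ E2)
      = t • fderiv ℝ w (x₀ + t • (x - x₀)) := by
    ext y; simp
  change ‖fderiv ℝ (fun y => t * w (x₀ + t • (y - x₀))) x‖ ^ 2 = _
  rw [gradSq, hderiv.fderiv, hcomp, smul_smul, norm_smul, Real.norm_eq_abs, mul_pow,
    sq_abs]
  ring

lemma integral_sq_dilate (w : E2 → ℝ) (ht : 0 < t) :
    ∫ x, dilate t x₀ w x ^ 2 = ∫ x, w x ^ 2 := by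
  simp_rw [dilate, mul_pow]
  rw [integral_const_mul, integral_comp_dilation (fun y => w y ^ 2) x₀ ht]
  field_simp

lemma integral_pow_four_dilate (w : E2 → ℝ) (ht : 0 < t) :
    ∫ x, dilate t x₀ w x ^ 4 = t ^ 2 * ∫ x, w x ^ 4 := by
  simp_rw [dilate, mul_pow]
  rw [integral_const_mul, integral_comp_dilation (fun y => w y ^ 4) x₀ ht]
  field_simp

lemma integral_gradSq_dilate {w : E2 → ℝ} (hw : Differentiable ℝ w) (ht : 0 < t) :
    ∫ x, gradSq (dilate t x₀ w) x = t ^ 2 * ∫ x, gradSq w x := by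
  simp_rw [gradSq_dilate hw]
  rw [integral_const_mul, integral_comp_dilation (gradSq w) x₀ ht]
  field_simp

lemma Ea_zero_dilate (a : ℝ) {w : E2 → ℝ} (hw : Differentiable ℝ w) (ht : 0 < t) :
    Ea 0 a (dilate t x₀ w) = t ^ 2 * Ea 0 a w := by
  rw [Ea_zero, Ea_zero, integral_gradSq_dilate hw ht, integral_pow_four_dilate w ht]
  ring

lemma isH1_dilate {w : E2 → ℝ} (hw : IsH1 w) (x₀ : E2) (ht : 0 < t) :
    IsH1 (dilate t x₀ w) := by
  obtain ⟨hdiff, hL2, hgrad, hL4⟩ := hw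
  refine ⟨?_, ?_, ?_, ?_⟩
  · exact (hdiff.comp (by fun_prop)).const_mul t
  · simp_rw [dilate, mul_pow]
    exact (hL2.comp_dilation x₀ ht).const_mul _
  · rw [show gradSq (dilate t x₀ w) = _ from funext (gradSq_dilate hdiff)]
    exact (hgrad.comp_dilation x₀ ht).const_mul _
  · simp_rw [dilate, mul_pow]
    exact (hL4.comp_dilation x₀ ht).const_mul _

lemma norm_sub_lt_of_dilate_ne_zero {w : E2 → ℝ} {R ε : ℝ} (ht : 0 < t)
    (hw : ∀ y, w y ≠ 0 → ‖y‖ < R) (htR : R + ‖x₀‖ ≤ t * ε) {x : E2}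
    (hx : dilate t x₀ w x ≠ 0) : ‖x - x₀‖ < ε := by
  have hy := hw _ (right_ne_zero_of_mul hx)
  have htri := norm_sub_le (x₀ + t • (x - x₀)) x₀
  rw [add_sub_cancel_left, norm_smul, Real.norm_eq_abs, abs_of_pos ht] at htri
  exact lt_of_mul_lt_mul_left (by linarith) ht.le

end Dilation

def cutoffBump : ContDiffBump (0 : E2) := ⟨1, 2, one_pos, one_lt_two⟩

def cutoff (n : ℕ) (x : E2) : ℝ := cutoffBump (((n : ℝ) + 1)⁻¹ • x)

lemma differentiable_cutoff (n : ℕ) : Differentiable ℝ (cutoff n) :=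
  ((cutoffBump.contDiff (n := 1)).differentiable one_ne_zero).comp (by fun_prop)

lemma abs_cutoff_le_one (n : ℕ) (x : E2) : |cutoff n x| ≤ 1 :=
  abs_le.2 ⟨(neg_one_lt_zero.trans_le cutoffBump.nonneg).le, cutoffBump.le_one⟩

lemma norm_inv_succ_smul (n : ℕ) (x : E2) : ‖((n : ℝ) + 1)⁻¹ • x‖ = ‖x‖ / ((n : ℝ) + 1) := by
  rw [norm_smul, norm_inv, Real.norm_of_nonneg (by positivity), inv_mul_eq_div]

lemma cutoff_eq_one {n : ℕ} {x : E2} (hx : ‖x‖ ≤ (n : ℝ) + 1) : cutoff n x = 1 := by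
  refine cutoffBump.one_of_mem_closedBall ?_
  rw [mem_closedBall_zero_iff, norm_inv_succ_smul]
  exact div_le_one_of_le₀ hx (by positivity)

lemma norm_lt_of_cutoff_ne_zero {n : ℕ} {x : E2} (hx : cutoff n x ≠ 0) :
    ‖x‖ < 2 * ((n : ℝ) + 1) := by
  have hmem : ((n : ℝ) + 1)⁻¹ • x ∈ Function.support cutoffBump := hx
  rw [cutoffBump.support_eq, mem_ball_zero_iff, norm_inv_succ_smul, div_lt_iff₀ (by positivity)]
    at hmem
  exact hmem

lemma exists_norm_fderiv_cutoff_le : ∃ C, ∀ n x, ‖fderiv ℝ (cutoff n) x‖ ≤ C := by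
  obtain ⟨C, hC⟩ := (cutoffBump.hasCompactSupport.fderiv (𝕜 := ℝ)).exists_bound_of_continuous
    ((cutoffBump.contDiff (n := 1)).continuous_fderiv one_ne_zero)
  refine ⟨C, fun n x => ?_⟩
  have hscale : ((n : ℝ) + 1)⁻¹ ≤ 1 := inv_le_one_of_one_le₀ (by simp)
  rw [show cutoff n = fun y => cutoffBump (((n : ℝ) + 1)⁻¹ • y) from rfl, fderiv_comp_smul,
    norm_smul, norm_inv, Real.norm_of_nonneg (by positivity)]
  exact (mul_le_of_le_one_left (norm_nonneg _) hscale).trans (hC _)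

lemma eventually_cutoff_mul_eventuallyEq (u : E2 → ℝ) (x : E2) :
    ∀ᶠ n : ℕ in atTop, (fun y => cutoff n y * u y) =ᶠ[𝓝 x] u := by
  filter_upwards [eventually_gt_atTop ⌈‖x‖⌉₊] with n hn
  have hx : ‖x‖ < (n : ℝ) + 1 := (Nat.le_ceil _).trans_lt (by exact_mod_cast hn.trans (by omega))
  filter_upwards [isOpen_ball.mem_nhds (mem_ball_zero_iff.2 hx)] with y hy
  rw [cutoff_eq_one (mem_ball_zero_iff.1 hy).le, one_mul]

def l2Normalize (φ : E2 → ℝ) (x : E2) : ℝ := (√(∫ y, φ y ^ 2))⁻¹ * φ x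

lemma integral_sq_l2Normalize {φ : E2 → ℝ} (h : ∫ x, φ x ^ 2 ≠ 0) :
    ∫ x, l2Normalize φ x ^ 2 = 1 := by
  simp_rw [l2Normalize, mul_pow]
  rw [integral_const_mul, inv_pow, sq_sqrt (integral_nonneg fun _ => sq_nonneg _),
    inv_mul_cancel₀ h]

lemma Ea_zero_l2Normalize (a : ℝ) {φ : E2 → ℝ} (hφ : Differentiable ℝ φ) :
    Ea 0 a (l2Normalize φ) = (∫ x, φ x ^ 2)⁻¹ * (∫ x, gradSq φ x)
      - a / 2 * ((∫ x, φ x ^ 2)⁻¹ ^ 2 * ∫ x, φ x ^ 4) := by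
  have hsq : (√(∫ x, φ x ^ 2))⁻¹ ^ 2 = (∫ x, φ x ^ 2)⁻¹ := by
    rw [inv_pow, sq_sqrt (integral_nonneg fun _ => sq_nonneg _)]
  have hgrad : gradSq (l2Normalize φ) = fun x => (∫ x, φ x ^ 2)⁻¹ * gradSq φ x := funext fun x => by
    rw [← hsq]; exact gradSq_const_mul (hφ x) _
  simp only [Ea_zero, hgrad, l2Normalize, mul_pow,
    integral_const_mul, hsq, show (4 : ℕ) = 2 * 2 from rfl, pow_mul]

lemma tendsto_integral_pow_cutoff_mul {u : E2 → ℝ} (hu : Continuous u) {k : ℕ} (hk : Even k)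
    (hint : Integrable fun x => u x ^ k) :
    Tendsto (fun n => ∫ x, (cutoff n x * u x) ^ k) atTop (𝓝 (∫ x, u x ^ k)) :=
  tendsto_integral_of_eventually_eq_of_dominated
    (fun n => (((differentiable_cutoff n).continuous.mul hu).pow k).aestronglyMeasurable) hint
    (fun n x => abs_mul_pow_le (abs_cutoff_le_one n x) hk)
    (fun x => (eventually_cutoff_mul_eventuallyEq u x).mono fun _ h => by rw [h.eq_of_nhds])

lemma tendsto_integral_gradSq_cutoff_mul {u : E2 → ℝ} (hu : IsH1 u) :
    Tendsto (fun n => ∫ x, gradSq (fun y => cutoff n y * u y) x) atTop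
      (𝓝 (∫ x, gradSq u x)) := by
  obtain ⟨C, hC⟩ := exists_norm_fderiv_cutoff_le
  refine tendsto_integral_of_eventually_eq_of_dominated (fun n => aestronglyMeasurable_gradSq _)
    ((hu.2.2.1.const_mul 2).add (hu.2.1.const_mul (2 * C ^ 2))) (fun n x => ?_)
    (fun x => (eventually_cutoff_mul_eventuallyEq u x).mono fun _ h => by
      rw [gradSq, gradSq, h.fderiv_eq])
  rw [abs_of_nonneg (sq_nonneg _)]
  exact gradSq_mul_le (differentiable_cutoff n) hu.1 (abs_cutoff_le_one n) (hC n) x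

lemma exists_normalized_bounded_support {u : E2 → ℝ} (hu : IsH1 u) (hmass : ∫ x, u x ^ 2 = 1)
    {a : ℝ} (hneg : Ea 0 a u < 0) :
    ∃ w : E2 → ℝ, ∃ R : ℝ, IsH1 w ∧ ∫ x, w x ^ 2 = 1 ∧ Ea 0 a w < 0 ∧
      ∀ x, w x ≠ 0 → ‖x‖ < R := by
  obtain ⟨C, hC⟩ := exists_norm_fderiv_cutoff_le
  have hmass_lim := tendsto_integral_pow_cutoff_mul hu.1.continuous even_two hu.2.1
  rw [hmass] at hmass_lim
  have hEa_lim : Tendsto (fun n => Ea 0 a (l2Normalize fun x => cutoff n x * u x)) atTop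
      (𝓝 (Ea 0 a u)) := by
    refine Tendsto.congr (fun n => (Ea_zero_l2Normalize a (φ := fun x => cutoff n x * u x)
      ((differentiable_cutoff n).mul hu.1)).symm) ?_
    have hlim := ((hmass_lim.inv₀ one_ne_zero).mul (tendsto_integral_gradSq_cutoff_mul hu)).sub
      ((((hmass_lim.inv₀ one_ne_zero).pow 2).mul
        (tendsto_integral_pow_cutoff_mul hu.1.continuous (by decide) hu.2.2.2)).const_mul (a / 2))
    rw [inv_one, one_pow, one_mul, one_mul] at hlim
    rwa [Ea_zero]
  obtain ⟨n, hn_mass, hn_neg⟩ :=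
    ((hmass_lim.eventually_ne one_ne_zero).and (hEa_lim.eventually_lt_const hneg)).exists
  refine ⟨_, 2 * ((n : ℝ) + 1),
    (hu.mul_of_bounded (differentiable_cutoff n) (abs_cutoff_le_one n) (hC n)).const_mul _,
    integral_sq_l2Normalize hn_mass, hn_neg, fun x hx =>
      norm_lt_of_cutoff_ne_zero (left_ne_zero_of_mul (right_ne_zero_of_mul hx))⟩

lemma exists_Ea_lt_of_Ea_neg {V : E2 → ℝ} (hV0 : ∀ x, 0 ≤ V x)
    (hVloc : ∀ r : ℝ, ∃ C : ℝ, ∀ x : E2, ‖x‖ ≤ r → |V x| ≤ C) {a : ℝ} {u : E2 → ℝ}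
    (hu : InH V u) (hmass : ∫ x, u x ^ 2 = 1) (hneg : Ea V a u < 0) (r : ℝ) :
    ∃ v, InH V v ∧ ∫ x, v x ^ 2 = 1 ∧ Ea V a v < r := by
  have hpot : 0 ≤ ∫ x, V x * u x ^ 2 := integral_nonneg fun x => mul_nonneg (hV0 x) (sq_nonneg _)
  have hneg₀ : Ea 0 a u < 0 := by
    rw [Ea_eq_Ea_zero_add] at hneg
    linarith
  obtain ⟨w, R, hw, hwmass, hwneg, hwR⟩ := exists_normalized_bounded_support hu.1 hmass hneg₀
  obtain ⟨x₀, hx₀⟩ : ∃ x₀, u x₀ ≠ 0 := by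
    by_contra! h
    simp [h] at hmass
  obtain ⟨ε, hε, hball⟩ :=
    Metric.isOpen_iff.1 (isOpen_ne_fun hu.1.1.continuous continuous_const) x₀ hx₀
  obtain ⟨C, hC⟩ := hVloc (‖x₀‖ + ε)
  obtain ⟨t, ht, htR, htE⟩ : ∃ t : ℝ, 0 < t ∧ R + ‖x₀‖ ≤ t * ε ∧ t ^ 2 * Ea 0 a w + C < r :=
    ((eventually_gt_atTop 0).and
      (((tendsto_id.atTop_mul_const hε).eventually_ge_atTop _).and
      (((tendsto_pow_atTop two_ne_zero).atTop_mul_const_of_neg hwneg).eventually_lt_atBot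
        (r - C) |>.mono fun _ h => by linarith))).exists
  have hvu : ∀ x, dilate t x₀ w x ≠ 0 → u x ≠ 0 ∧ |V x| ≤ C := by
    intro x hx
    have hdist : ‖x - x₀‖ < ε := norm_sub_lt_of_dilate_ne_zero ht hwR htR hx
    refine ⟨hball (mem_ball_iff_norm.2 hdist), hC x ?_⟩
    linarith [norm_le_norm_add_norm_sub' x x₀]
  have hv : IsH1 (dilate t x₀ w) := isH1_dilate hw x₀ ht
  have hv2 : ∫ x, dilate t x₀ w x ^ 2 = 1 := (integral_sq_dilate w ht).trans hwmass
  have hVv := integrable_mul_sq_of_ne_zero hu.2 hu.1.1.continuous.measurable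
    hv.1.continuous.measurable hv.2.1 hvu
  refine ⟨dilate t x₀ w, ⟨hv, hVv⟩, hv2, ?_⟩
  calc Ea V a (dilate t x₀ w)
      = t ^ 2 * Ea 0 a w + ∫ x, V x * dilate t x₀ w x ^ 2 := by
        rw [Ea_eq_Ea_zero_add, Ea_zero_dilate a hw.1 ht]
    _ ≤ t ^ 2 * Ea 0 a w + C := by
        have := integral_mul_sq_le hVv hv.2.1 fun x hx => (le_abs_self _).trans (hvu x hx).2
        rw [hv2, mul_one] at this
        linarith
    _ < r := htE

lemma gpE_eq_bot_of_forall_exists_Ea_lt {V : E2 → ℝ} {a : ℝ}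
    (h : ∀ r : ℝ, ∃ u, InH V u ∧ ∫ x, u x ^ 2 = 1 ∧ Ea V a u < r) : gpE V a = ⊥ := by
  refine (EReal.eq_bot_iff_forall_lt _).2 fun r => ?_
  obtain ⟨u, hu, hmass, hlt⟩ := h r
  exact (show gpE V a ≤ Ea V a u from sInf_le ⟨u, hu, hmass, rfl⟩).trans_lt
    (EReal.coe_lt_coe_iff.2 hlt)

lemma exists_Ea_lt_of_gpE_lt {V : E2 → ℝ} {a r : ℝ} (h : gpE V a < r) :
    ∃ u, InH V u ∧ ∫ x, u x ^ 2 = 1 ∧ Ea V a u < r := by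
  obtain ⟨_, ⟨u, hu, hmass, rfl⟩, hlt⟩ := sInf_lt_iff.1 h
  exact ⟨u, hu, hmass, EReal.coe_lt_coe_iff.1 hlt⟩

theorem stmt5_general (V : E2 → ℝ) (hV0 : ∀ x, 0 ≤ V x)
    (hVloc : ∀ r : ℝ, ∃ C : ℝ, ∀ x : E2, ‖x‖ ≤ r → |V x| ≤ C)
    (a : ℝ) :
    (0 : EReal) ≤ gpE V a ∨ gpE V a = ⊥ := by
  refine or_iff_not_imp_left.2 fun hneg => gpE_eq_bot_of_forall_exists_Ea_lt fun r => ?_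
  obtain ⟨u, hu, hmass, hu_neg⟩ := exists_Ea_lt_of_gpE_lt (r := 0) (not_le.1 hneg)
  exact exists_Ea_lt_of_Ea_neg hV0 hVloc hu hmass hu_neg r

theorem stmt5 (V : E2 → ℝ) (hV0 : ∀ x, 0 ≤ V x)
    (hVloc : ∀ r : ℝ, ∃ C : ℝ, ∀ x : E2, ‖x‖ ≤ r → |V x| ≤ C)
    (a : ℝ) (ha : 0 ≤ a) :
    (0 : EReal) ≤ gpE V a ∨ gpE V a = ⊥ :=
  stmt5_general V hV0 hVloc a
end
end

section
/- If a minimizer u_a of e(a) (0 ≤ a ≤ a*) exists for each a, then a ↦ ∫_{ℝ²}|u_a|⁴ dx is non-decreasing; in particular ∫|u_a|⁴ ≥ ∫|u_0|⁴ for all 0 ≤ a ≤ a*. -/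
open MeasureTheory Real Filter

noncomputable section

/-- Adding the two minimality inequalities gives `(t - s) * (g y - g x) ≥ 0`. -/
theorem le_of_isMinOn_sub_mul {α : Type*} {S : Set α} {f g : α → ℝ} {s t : ℝ} {x y : α}
    (hst : s < t) (hx : x ∈ S) (hy : y ∈ S)
    (hxmin : IsMinOn (fun z => f z - s * g z) S x)
    (hymin : IsMinOn (fun z => f z - t * g z) S y) :
    g x ≤ g y := by
  have hsx : f x - s * g x ≤ f y - s * g y := hxmin hy
  have hty : f y - t * g y ≤ f x - t * g x := hymin hx
  nlinarith

def unitSphereH (V : E2 → ℝ) : Set (E2 → ℝ) :=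
  {v | InH V v ∧ (∫ x, v x ^ 2) = 1}

theorem IsMinimizer.mem_unitSphereH {V : E2 → ℝ} {a : ℝ} {u : E2 → ℝ}
    (hu : IsMinimizer V a u) : u ∈ unitSphereH V :=
  ⟨hu.1, hu.2.1⟩

theorem IsMinimizer.isMinOn {V : E2 → ℝ} {a : ℝ} {u : E2 → ℝ} (hu : IsMinimizer V a u) :
    IsMinOn (fun v => ((∫ x, gradSq v x) + ∫ x, V x * v x ^ 2) - a / 2 * ∫ x, v x ^ 4)
      (unitSphereH V) u :=
  fun v hv => hu.2.2 v hv.1 hv.2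

theorem IsMinimizer.integral_pow_four_le {V : E2 → ℝ} {a b : ℝ} {ua ub : E2 → ℝ}
    (hab : a < b) (hua : IsMinimizer V a ua) (hub : IsMinimizer V b ub) :
    (∫ x, ua x ^ 4) ≤ ∫ x, ub x ^ 4 :=
  le_of_isMinOn_sub_mul (g := fun v => ∫ x, v x ^ 4) (div_lt_div_of_pos_right hab two_pos)
    hua.mem_unitSphereH hub.mem_unitSphereH hua.isMinOn hub.isMinOn

theorem stmt16_general (Q : E2 → ℝ) (V : E2 → ℝ)
    (u : ℝ → E2 → ℝ)
    (hu : ∀ a : ℝ, 0 ≤ a → a ≤ (∫ x : E2, Q x ^ 2) → IsMinimizer V a (u a)) :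
    (∀ a b : ℝ, 0 ≤ a → a ≤ b → b ≤ (∫ x : E2, Q x ^ 2) →
      (∫ x : E2, u a x ^ 4) ≤ (∫ x : E2, u b x ^ 4)) ∧
    (∀ a : ℝ, 0 ≤ a → a ≤ (∫ x : E2, Q x ^ 2) →
      (∫ x : E2, u 0 x ^ 4) ≤ (∫ x : E2, u a x ^ 4)) := by
  have mono : ∀ a b : ℝ, 0 ≤ a → a ≤ b → b ≤ (∫ x : E2, Q x ^ 2) →
      (∫ x : E2, u a x ^ 4) ≤ (∫ x : E2, u b x ^ 4) := by
    intro a b ha hab hb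
    rcases hab.eq_or_lt with rfl | hlt
    · exact le_rfl
    exact (hu a ha (hab.trans hb)).integral_pow_four_le hlt (hu b (ha.trans hab) hb)
  exact ⟨mono, fun a ha haQ => mono 0 a le_rfl ha haQ⟩

theorem stmt16 (Q : E2 → ℝ) (hQ : IsGroundState Q) (V : E2 → ℝ)
    (u : ℝ → E2 → ℝ)
    (hu : ∀ a : ℝ, 0 ≤ a → a ≤ (∫ x : E2, Q x ^ 2) → IsMinimizer V a (u a)) :
    (∀ a b : ℝ, 0 ≤ a → a ≤ b → b ≤ (∫ x : E2, Q x ^ 2) →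
      (∫ x : E2, u a x ^ 4) ≤ (∫ x : E2, u b x ^ 4)) ∧
    (∀ a : ℝ, 0 ≤ a → a ≤ (∫ x : E2, Q x ^ 2) →
      (∫ x : E2, u 0 x ^ 4) ≤ (∫ x : E2, u a x ^ 4)) :=
  stmt16_general Q V u hu
end
end

section
/- Let Q : ℝ² → (0,∞) be radial and strictly decreasing in |x| with ∫|x|^p Q(x)² dx < ∞ for some p > 0. Then for every y ∈ ℝ², ∫_{ℝ²} |x + y|^p Q(x)² dx ≥ ∫_{ℝ²} |x|^p Q(x)² dx, with equality if and only if y = 0. -/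
open MeasureTheory Real Filter

noncomputable section

/-! The substitution `x ↦ -x - y`, together with the radial symmetry of `Q`, turns
`∫ ‖x‖ ^ p Q(x + y)²` into `∫ ‖x + y‖ ^ p Q(x)²`, and translation invariance gives
`∫ ‖x + y‖ ^ p Q(x + y)² = ∫ ‖x‖ ^ p Q(x)²`. Hence twice the difference of the two moments is
`∫ (‖x + y‖ ^ p - ‖x‖ ^ p) (Q(x)² - Q(x + y)²) dx`,
whose integrand is nonnegative because `‖·‖ ^ p` increases and `Q²` decreases with the norm,
and positive on the nonempty open set `{x | ‖x + y‖ ≠ ‖x‖}` when `y ≠ 0`. -/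

open Metric

section Radial

variable {E : Type*} [NormedAddCommGroup E]

-- The `↔` makes such a function radial as well (`eq_of_norm_eq`).
def StrictMonoNorm (f : E → ℝ) : Prop := ∀ a b, f a < f b ↔ ‖a‖ < ‖b‖

def StrictAntiNorm (g : E → ℝ) : Prop := ∀ a b, g b < g a ↔ ‖a‖ < ‖b‖

variable {f g : E → ℝ}

lemma StrictMonoNorm.eq_of_norm_eq (hf : StrictMonoNorm f) {a b : E} (h : ‖a‖ = ‖b‖) :
    f a = f b :=
  le_antisymm (not_lt.1 fun hab => ((hf b a).1 hab).ne h.symm)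
    (not_lt.1 fun hab => ((hf a b).1 hab).ne h)

lemma StrictAntiNorm.neg (hg : StrictAntiNorm g) : StrictMonoNorm fun x => -g x := fun a b => by
  simpa only [neg_lt_neg_iff] using hg a b

lemma StrictAntiNorm.eq_of_norm_eq (hg : StrictAntiNorm g) {a b : E} (h : ‖a‖ = ‖b‖) :
    g a = g b :=
  neg_inj.1 (hg.neg.eq_of_norm_eq h)

lemma StrictAntiNorm.le_of_norm_le (hg : StrictAntiNorm g) {a b : E} (h : ‖a‖ ≤ ‖b‖) :
    g b ≤ g a :=
  not_lt.1 fun hab => h.not_gt ((hg b a).1 hab)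

lemma StrictAntiNorm.measurable [NormedSpace ℝ E] [Nontrivial E] [MeasurableSpace E]
    [OpensMeasurableSpace E] (hg : StrictAntiNorm g) : Measurable g := by
  obtain ⟨u, hu⟩ := exists_norm_eq E zero_le_one
  have hnorm : ∀ t : ℝ, ‖max t 0 • u‖ = max t 0 := fun t => by
    rw [norm_smul, hu, mul_one, Real.norm_of_nonneg (le_max_right _ _)]
  have hG : Antitone fun t : ℝ => g (max t 0 • u) := fun s t hst =>
    hg.le_of_norm_le (by simpa only [hnorm] using max_le_max_right 0 hst)
  have hg_eq : g = (fun t : ℝ => g (max t 0 • u)) ∘ norm := funext fun x =>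
    hg.eq_of_norm_eq (by rw [hnorm, max_eq_left (norm_nonneg x)])
  rw [hg_eq]
  exact hG.measurable.comp measurable_norm

lemma sub_mul_sub_pos_of_norm_ne (hf : StrictMonoNorm f) (hg : StrictAntiNorm g) {a b : E}
    (h : ‖a‖ ≠ ‖b‖) : 0 < (f b - f a) * (g a - g b) := by
  rcases h.lt_or_gt with hab | hba
  · exact mul_pos (sub_pos.2 ((hf a b).2 hab)) (sub_pos.2 ((hg a b).2 hab))
  · exact mul_pos_of_neg_of_neg (sub_neg.2 ((hf b a).2 hba)) (sub_neg.2 ((hg b a).2 hba))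

lemma sub_mul_sub_nonneg (hf : StrictMonoNorm f) (hg : StrictAntiNorm g) (a b : E) :
    0 ≤ (f b - f a) * (g a - g b) := by
  by_cases h : ‖a‖ = ‖b‖
  · rw [hf.eq_of_norm_eq h, hg.eq_of_norm_eq h, sub_self, zero_mul]
  · exact (sub_mul_sub_pos_of_norm_ne hf hg h).le

end Radial

lemma rpow_norm_add_le {E : Type*} [SeminormedAddGroup E] {p : ℝ} (hp : 0 ≤ p) (x y : E) :
    ‖x + y‖ ^ p ≤ 2 ^ p * (‖x‖ ^ p + ‖y‖ ^ p) := by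
  have hmax : ‖x + y‖ ≤ 2 * max ‖x‖ ‖y‖ :=
    (norm_add_le x y).trans (by linarith [le_max_left ‖x‖ ‖y‖, le_max_right ‖x‖ ‖y‖])
  calc ‖x + y‖ ^ p ≤ (2 * max ‖x‖ ‖y‖) ^ p := Real.rpow_le_rpow (norm_nonneg _) hmax hp
    _ = 2 ^ p * max ‖x‖ ‖y‖ ^ p := Real.mul_rpow zero_le_two (le_max_of_le_left (norm_nonneg x))
    _ ≤ 2 ^ p * (‖x‖ ^ p + ‖y‖ ^ p) := by
      gcongr
      rcases max_choice ‖x‖ ‖y‖ with h | h <;> rw [h]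
      · exact le_add_of_nonneg_right (by positivity)
      · exact le_add_of_nonneg_left (by positivity)

section Integrability

variable {E : Type*} [NormedAddCommGroup E] [MeasurableSpace E] [OpensMeasurableSpace E]
  {μ : Measure E} {g : E → ℝ} {p : ℝ}

lemma StrictAntiNorm.integrable [NormedSpace ℝ E] [Nontrivial E] [ProperSpace E]
    [IsFiniteMeasureOnCompacts μ] (hg : StrictAntiNorm g) (hg0 : ∀ x, 0 ≤ g x) (hp : 0 ≤ p)
    (h : Integrable (fun x => ‖x‖ ^ p * g x) μ) : Integrable g μ := by
  have hball : Integrable ((closedBall (0 : E) 1).indicator fun _ => g 0) μ :=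
    (integrableOn_const measure_closedBall_lt_top.ne).integrable_indicator measurableSet_closedBall
  refine (hball.add h).mono' hg.measurable.aestronglyMeasurable (ae_of_all _ fun x => ?_)
  rw [Real.norm_of_nonneg (hg0 x), Pi.add_apply]
  have hmoment : 0 ≤ ‖x‖ ^ p * g x := mul_nonneg (by positivity) (hg0 x)
  by_cases hx : x ∈ closedBall (0 : E) 1
  · rw [Set.indicator_of_mem hx]
    linarith [hg.le_of_norm_le (a := 0) (b := x) (by simp)]
  · rw [Set.indicator_of_notMem hx, zero_add]
    rw [mem_closedBall, dist_zero_right, not_le] at hx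
    exact le_mul_of_one_le_left (hg0 x) (Real.one_le_rpow hx.le hp)

lemma MeasureTheory.Integrable.rpow_norm_add_mul (h : Integrable (fun x => ‖x‖ ^ p * g x) μ)
    (hp : 0 ≤ p) (hg0 : ∀ x, 0 ≤ g x) (hg : Integrable g μ) (y : E) :
    Integrable (fun x => ‖x + y‖ ^ p * g x) μ := by
  have hcont : Continuous fun x : E => ‖x + y‖ ^ p :=
    (continuous_norm.comp (continuous_add_const y)).rpow_const fun _ => Or.inr hp
  refine ((h.add (hg.const_mul (‖y‖ ^ p))).const_mul (2 ^ p)).mono'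
    (hcont.aestronglyMeasurable.mul hg.aestronglyMeasurable) (ae_of_all _ fun x => ?_)
  rw [Real.norm_of_nonneg (mul_nonneg (by positivity) (hg0 x))]
  calc ‖x + y‖ ^ p * g x ≤ 2 ^ p * (‖x‖ ^ p + ‖y‖ ^ p) * g x :=
        mul_le_mul_of_nonneg_right (rpow_norm_add_le hp x y) (hg0 x)
    _ = 2 ^ p * (‖x‖ ^ p * g x + ‖y‖ ^ p * g x) := by ring

end Integrability

section Reflection

variable {G : Type*} [AddCommGroup G] {f g : G → ℝ} {y : G}

lemma mul_comp_add_eq_of_even (hf : ∀ x, f (-x) = f x) (hg : ∀ x, g (-x) = g x) (x : G) :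
    f x * g (x + y) = f (-(x + y) + y) * g (-(x + y)) := by
  rw [show -(x + y) + y = -x by abel, hf, hg]

lemma sub_mul_sub_comp_add_eq :
    (fun x => (f (x + y) - f x) * (g x - g (x + y))) =
      fun x => (f (x + y) * g x - f (x + y) * g (x + y)) - (f x * g x - f x * g (x + y)) := by
  funext x; ring

variable [MeasurableSpace G] [MeasurableAdd G] [MeasurableNeg G] {μ : Measure G}
  [μ.IsAddRightInvariant] [μ.IsNegInvariant]

lemma integral_mul_comp_add_of_even (hf : ∀ x, f (-x) = f x) (hg : ∀ x, g (-x) = g x) :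
    ∫ x, f x * g (x + y) ∂μ = ∫ x, f (x + y) * g x ∂μ := by
  simp_rw [mul_comp_add_eq_of_even hf hg]
  exact (integral_add_right_eq_self (fun z => f (-z + y) * g (-z)) y).trans
    (integral_neg_eq_self (fun z => f (z + y) * g z) μ)

lemma MeasureTheory.Integrable.mul_comp_add_of_even (hf : ∀ x, f (-x) = f x)
    (hg : ∀ x, g (-x) = g x) (h : Integrable (fun x => f (x + y) * g x) μ) :
    Integrable (fun x => f x * g (x + y)) μ := by
  simp_rw [mul_comp_add_eq_of_even hf hg]
  exact h.comp_neg.comp_add_right y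

lemma MeasureTheory.Integrable.sub_mul_sub_comp_add (hf : ∀ x, f (-x) = f x)
    (hg : ∀ x, g (-x) = g x) (hfg : Integrable (fun x => f x * g x) μ)
    (hfgy : Integrable (fun x => f (x + y) * g x) μ) :
    Integrable (fun x => (f (x + y) - f x) * (g x - g (x + y))) μ := by
  rw [sub_mul_sub_comp_add_eq]
  exact (hfgy.sub (hfg.comp_add_right y)).sub (hfg.sub (hfgy.mul_comp_add_of_even hf hg))

lemma integral_sub_mul_sub_comp_add (hf : ∀ x, f (-x) = f x) (hg : ∀ x, g (-x) = g x)
    (hfg : Integrable (fun x => f x * g x) μ) (hfgy : Integrable (fun x => f (x + y) * g x) μ) :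
    ∫ x, (f (x + y) - f x) * (g x - g (x + y)) ∂μ =
      2 * (∫ x, f (x + y) * g x ∂μ - ∫ x, f x * g x ∂μ) := by
  have htranslate : ∫ x, f (x + y) * g (x + y) ∂μ = ∫ x, f x * g x ∂μ :=
    integral_add_right_eq_self (fun x => f x * g x) y
  have hfgy' := hfg.comp_add_right y
  have hreflect := hfgy.mul_comp_add_of_even hf hg
  rw [sub_mul_sub_comp_add_eq, integral_sub, integral_sub hfgy hfgy', integral_sub hfg hreflect,
    htranslate, integral_mul_comp_add_of_even hf hg]
  · ring
  · exact hfgy.sub hfgy'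
  · exact hfg.sub hreflect

end Reflection

section MomentComparison

variable {E : Type*} [NormedAddCommGroup E] [MeasurableSpace E] [MeasurableAdd E]
  [MeasurableNeg E] {μ : Measure E} [μ.IsAddRightInvariant] [μ.IsNegInvariant] {f g : E → ℝ}
  {y : E}

theorem integral_mul_le_integral_comp_add_mul (hf : StrictMonoNorm f) (hg : StrictAntiNorm g)
    (hfg : Integrable (fun x => f x * g x) μ) (hfgy : Integrable (fun x => f (x + y) * g x) μ) :
    ∫ x, f x * g x ∂μ ≤ ∫ x, f (x + y) * g x ∂μ := by
  have hD : 0 ≤ ∫ x, (f (x + y) - f x) * (g x - g (x + y)) ∂μ :=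
    integral_nonneg fun x => sub_mul_sub_nonneg hf hg x (x + y)
  rw [integral_sub_mul_sub_comp_add (fun x => hf.eq_of_norm_eq (norm_neg x))
    (fun x => hg.eq_of_norm_eq (norm_neg x)) hfg hfgy] at hD
  linarith

theorem integral_mul_lt_integral_comp_add_mul [μ.IsOpenPosMeasure] (hf : StrictMonoNorm f)
    (hg : StrictAntiNorm g) (hfg : Integrable (fun x => f x * g x) μ)
    (hfgy : Integrable (fun x => f (x + y) * g x) μ) (hy : y ≠ 0) :
    ∫ x, f x * g x ∂μ < ∫ x, f (x + y) * g x ∂μ := by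
  have hf_even : ∀ x, f (-x) = f x := fun x => hf.eq_of_norm_eq (norm_neg x)
  have hg_even : ∀ x, g (-x) = g x := fun x => hg.eq_of_norm_eq (norm_neg x)
  have hU : 0 < μ {x | ‖x‖ ≠ ‖x + y‖} :=
    (isOpen_ne_fun continuous_norm (continuous_norm.comp (continuous_add_const y))).measure_pos μ
      ⟨0, by simpa [eq_comm] using hy⟩
  have hD : 0 < ∫ x, (f (x + y) - f x) * (g x - g (x + y)) ∂μ :=
    (integral_pos_iff_support_of_nonneg (fun x => sub_mul_sub_nonneg hf hg x (x + y))
      (hfg.sub_mul_sub_comp_add hf_even hg_even hfgy)).2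
      (hU.trans_le (measure_mono fun x hx => (sub_mul_sub_pos_of_norm_ne hf hg hx).ne'))
  rw [integral_sub_mul_sub_comp_add hf_even hg_even hfg hfgy] at hD
  linarith

end MomentComparison

theorem stmt19 (Q : E2 → ℝ) (p : ℝ) (hp : 0 < p)
    (hpos : ∀ x, 0 < Q x)
    (hrad : ∀ x y : E2, ‖x‖ = ‖y‖ → Q x = Q y)
    (hdec : ∀ x y : E2, ‖x‖ < ‖y‖ → Q y < Q x)
    (hint : Integrable (fun x : E2 => ‖x‖ ^ p * Q x ^ 2)) (y : E2) :
    (∫ x : E2, ‖x‖ ^ p * Q x ^ 2) ≤ (∫ x : E2, ‖x + y‖ ^ p * Q x ^ 2) ∧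
    ((∫ x : E2, ‖x + y‖ ^ p * Q x ^ 2) = (∫ x : E2, ‖x‖ ^ p * Q x ^ 2) ↔ y = 0) := by
  have hQ : StrictAntiNorm Q := fun a b => by
    refine ⟨fun hba => lt_of_not_ge fun hab => ?_, hdec a b⟩
    rcases hab.eq_or_lt with heq | hlt
    · exact hba.ne (hrad b a heq)
    · exact (hdec b a hlt).asymm hba
  have hQ2 : StrictAntiNorm fun x => Q x ^ 2 := fun a b =>
    (pow_lt_pow_iff_left₀ (hpos b).le (hpos a).le two_ne_zero).trans (hQ a b)
  have hpow : StrictMonoNorm fun x : E2 => ‖x‖ ^ p := fun a b =>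
    Real.rpow_lt_rpow_iff (norm_nonneg a) (norm_nonneg b) hp
  have hshift : Integrable fun x : E2 => ‖x + y‖ ^ p * Q x ^ 2 :=
    hint.rpow_norm_add_mul hp.le (fun x => sq_nonneg _)
      (hQ2.integrable (fun x => sq_nonneg _) hp.le hint) y
  refine ⟨integral_mul_le_integral_comp_add_mul hpow hQ2 hint hshift, fun heq => ?_, ?_⟩
  · by_contra hy
    exact (integral_mul_lt_integral_comp_add_mul hpow hQ2 hint hshift hy).ne' heq
  · rintro rfl
    simp
end
end
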